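/- Let k be a field of characteristic zero, let n ≥ 1, let h ∈ k[x_0,…,x_n] be a homogeneous polynomial of degree d ∈ ℕ, and let f_0,…,f_n ∈ k(x_0,…,x_n) be homogeneous rational functions of degree e ∈ ℤ with e ≠ 0. Then e·Σ_{i=0}^n f_i·Jac(f_0,…,f_{i−1},h,f_{i+1},…,f_n) = d·h·Jac(f_0,…,f_n). -/

import Mathlib

/-!
The Euler derivation `E = ∑ⱼ xⱼ ∂ⱼ` acts on a homogeneous rational function of degree `e` as
multiplication by `e` (Euler's identity for numerator and denominator, and the quotient rule).
Hence the Jacobian matrix `A = (∂ⱼ fᵢ)` sends `x` to `e • f`, and the left-hand side is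
`∑ᵢ (A x)ᵢ · det (A with row i replaced by ∇h)`. By Cramer's rule this equals
`det A · (x ⬝ ∇h) = det A · E h = d · h · det A`.
-/

open MvPolynomial

noncomputable section

/-- `F = k(x_0,…,x_n)`, the fraction field of `k[x_0,…,x_n]` (in `n+1` variables). -/
abbrev Fn (k : Type) [Field k] (n : ℕ) : Type :=
  FractionRing (MvPolynomial (Fin (n + 1)) k)

/-- The family `D` of derivations on `k(x_0,…,x_n)` consists of the canonical extensions
of the partial derivatives `∂/∂x_j` on `k[x_0,…,x_n]`. -/
def ExtendsPderiv (k : Type) [Field k] (n : ℕ)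
    (D : Fin (n + 1) → Derivation k (Fn k n) (Fn k n)) : Prop :=
  ∀ (j : Fin (n + 1)) (p : MvPolynomial (Fin (n + 1)) k),
    D j (algebraMap (MvPolynomial (Fin (n + 1)) k) (Fn k n) p) =
      algebraMap (MvPolynomial (Fin (n + 1)) k) (Fn k n) (pderiv j p)

/-- `Jac(f_0,…,f_n) = det (∂f_i/∂x_j)`. -/
def Jac (k : Type) [Field k] (n : ℕ)
    (D : Fin (n + 1) → Derivation k (Fn k n) (Fn k n))
    (f : Fin (n + 1) → Fn k n) : Fn k n :=
  Matrix.det (Matrix.of fun i j => D j (f i))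

/-- `f ∈ k(x_0,…,x_n)` is homogeneous of degree `e ∈ ℤ`: it can be written as a quotient
`g/h` of nonzero homogeneous polynomials with `deg g − deg h = e`. -/
def IsHomogeneousRat (k : Type) [Field k] (n : ℕ) (f : Fn k n) (e : ℤ) : Prop :=
  ∃ (g h : MvPolynomial (Fin (n + 1)) k) (dg dh : ℕ),
    g ≠ 0 ∧ h ≠ 0 ∧ g.IsHomogeneous dg ∧ h.IsHomogeneous dh ∧
    f = algebraMap (MvPolynomial (Fin (n + 1)) k) (Fn k n) g /
        algebraMap (MvPolynomial (Fin (n + 1)) k) (Fn k n) h ∧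
    (dg : ℤ) - (dh : ℤ) = e

namespace Matrix

variable {ι α : Type*} [Fintype ι] [DecidableEq ι] [CommRing α]

theorem sum_mulVec_mul_det_updateRow (A : Matrix ι ι α) (x v : ι → α) :
    ∑ i, (A *ᵥ x) i * (A.updateRow i v).det = A.det * (x ⬝ᵥ v) := by
  simp_rw [← cramer_transpose_apply]
  calc (A *ᵥ x) ⬝ᵥ cramer Aᵀ v
      = x ⬝ᵥ (Aᵀ *ᵥ cramer Aᵀ v) := by
        rw [← vecMul_transpose, dotProduct_mulVec]
    _ = A.det * (x ⬝ᵥ v) := by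
        rw [mulVec_cramer, det_transpose, dotProduct_smul, smul_eq_mul]

end Matrix

theorem Derivation.map_div_of_map_eq_mul {R K : Type*} [CommRing R] [Field K] [Algebra R K]
    (E : Derivation R K K) {g h a b : K} (hg : E g = a * g) (hh : E h = b * h) :
    E (g / h) = (a - b) * (g / h) := by
  rcases eq_or_ne h 0 with rfl | h0
  · simp
  rw [leibniz_div, hg, hh, smul_eq_mul, smul_eq_mul, smul_eq_mul]
  field_simp

section Euler

variable {σ R K : Type*} [Fintype σ] [CommRing R] [Field K] [Algebra R K]
  [Algebra (MvPolynomial σ R) K]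

def eulerDerivation (D : σ → Derivation R K K) : Derivation R K K :=
  ∑ j, algebraMap (MvPolynomial σ R) K (X j) • D j

theorem eulerDerivation_apply (D : σ → Derivation R K K) (f : K) :
    eulerDerivation D f = ∑ j, algebraMap (MvPolynomial σ R) K (X j) * D j f := by
  rw [eulerDerivation, ← Derivation.coeFnAddMonoidHom_apply, map_sum, Finset.sum_apply]
  rfl

theorem eulerDerivation_algebraMap_of_isHomogeneous [DecidableEq σ] {D : σ → Derivation R K K}
    (hD : ∀ j p, D j (algebraMap (MvPolynomial σ R) K p) =
      algebraMap (MvPolynomial σ R) K (pderiv j p))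
    {p : MvPolynomial σ R} {m : ℕ} (hp : p.IsHomogeneous m) :
    eulerDerivation D (algebraMap (MvPolynomial σ R) K p) =
      m * algebraMap (MvPolynomial σ R) K p := by
  simp_rw [eulerDerivation_apply, hD, ← map_mul, ← map_sum, hp.sum_X_mul_pderiv, nsmul_eq_mul,
    map_mul, map_natCast]

end Euler

theorem eulerDerivation_apply_of_isHomogeneousRat {k : Type} [Field k] {n : ℕ}
    {D : Fin (n + 1) → Derivation k (Fn k n) (Fn k n)} (hD : ExtendsPderiv k n D)
    {f : Fn k n} {e : ℤ} (hf : IsHomogeneousRat k n f e) :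
    eulerDerivation D f = e * f := by
  obtain ⟨g, p, dg, dp, -, -, hg, hp, rfl, rfl⟩ := hf
  rw [Derivation.map_div_of_map_eq_mul _ (eulerDerivation_algebraMap_of_isHomogeneous hD hg)
    (eulerDerivation_algebraMap_of_isHomogeneous hD hp)]
  push_cast
  rfl

theorem jac_update {k : Type} [Field k] {n : ℕ} (D : Fin (n + 1) → Derivation k (Fn k n) (Fn k n))
    (f : Fin (n + 1) → Fn k n) (i : Fin (n + 1)) (g : Fn k n) :
    Jac k n D (Function.update f i g) =
      ((Matrix.of fun i j => D j (f i)).updateRow i fun j => D j g).det := by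
  rw [Jac, Matrix.updateRow]
  congr 2
  funext i'
  exact Function.apply_update (fun _ y j => D j y) f i g i'

open Matrix in
theorem euler_jac_identity_general (k : Type) [Field k] (n : ℕ)
    (D : Fin (n + 1) → Derivation k (Fn k n) (Fn k n)) (hD : ExtendsPderiv k n D)
    (h : MvPolynomial (Fin (n + 1)) k) (d : ℕ) (hh : h.IsHomogeneous d)
    (f : Fin (n + 1) → Fn k n) (e : ℤ)
    (hf : ∀ i, IsHomogeneousRat k n (f i) e) :
    (e : Fn k n) * ∑ i : Fin (n + 1), f i *
        Jac k n D (Function.update f i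
          (algebraMap (MvPolynomial (Fin (n + 1)) k) (Fn k n) h)) =
      (d : Fn k n) * algebraMap (MvPolynomial (Fin (n + 1)) k) (Fn k n) h *
        Jac k n D f := by
  set φ := algebraMap (MvPolynomial (Fin (n + 1)) k) (Fn k n)
  set A : Matrix (Fin (n + 1)) (Fin (n + 1)) (Fn k n) := Matrix.of fun i j => D j (f i)
  have hA : A *ᵥ (fun j => φ (X j)) = fun i => e * f i := by
    ext i
    rw [← eulerDerivation_apply_of_isHomogeneousRat hD (hf i), eulerDerivation_apply]
    simp only [A, mulVec, dotProduct, of_apply, mul_comm]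
    rfl
  have hEh := eulerDerivation_algebraMap_of_isHomogeneous hD hh
  rw [eulerDerivation_apply] at hEh
  calc (e : Fn k n) * ∑ i, f i * Jac k n D (Function.update f i (φ h))
      = ∑ i, (A *ᵥ fun j => φ (X j)) i * (A.updateRow i fun j => D j (φ h)).det := by
        simp_rw [hA, jac_update, Finset.mul_sum, mul_assoc]; rfl
    _ = A.det * ((fun j => φ (X j)) ⬝ᵥ fun j => D j (φ h)) :=
        sum_mulVec_mul_det_updateRow _ _ _
    _ = d * φ h * Jac k n D f := by
        rw [dotProduct, hEh, Jac, mul_comm]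

/-- Euler-type identity: if `char k = 0`, `h` is homogeneous of degree `d` and
`f_0,…,f_n` are homogeneous rational functions of degree `e ≠ 0`, then
`e·Σ_i f_i·Jac(f_0,…,f_{i−1},h,f_{i+1},…,f_n) = d·h·Jac(f_0,…,f_n)`. -/
theorem euler_jac_identity (k : Type) [Field k] [CharZero k] (n : ℕ) (hn : 1 ≤ n)
    (D : Fin (n + 1) → Derivation k (Fn k n) (Fn k n)) (hD : ExtendsPderiv k n D)
    (h : MvPolynomial (Fin (n + 1)) k) (d : ℕ) (hh : h.IsHomogeneous d)
    (f : Fin (n + 1) → Fn k n) (e : ℤ) (he : e ≠ 0)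
    (hf : ∀ i, IsHomogeneousRat k n (f i) e) :
    (e : Fn k n) * ∑ i : Fin (n + 1), f i *
        Jac k n D (Function.update f i
          (algebraMap (MvPolynomial (Fin (n + 1)) k) (Fn k n) h)) =
      (d : Fn k n) * algebraMap (MvPolynomial (Fin (n + 1)) k) (Fn k n) h *
        Jac k n D f :=
  euler_jac_identity_general k n D hD h d hh f e hf
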